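/- Let (α, β) : P → P′ be a bounded morphism between Ω-polarities. Define im(α, β) = (α[X], β[Y], R″, S″, T″), where R″ = R′ ∩ (α[X] × β[Y]), S″ = S′ ∩ (α[X]ⁿ × β[Y]) and T″ = T′ ∩ (α[X] × β[Y]ᵐ). Then: (1) the quasi-orders ≤₁″ and ≤₂″ defined from R″ on α[X] and β[Y] are the restrictions of ≤₁′ and ≤₂′ respectively; (2) all sections of S″ and T″ are stable in the polarity (α[X], β[Y], R″), so im(α, β) is an Ω-polarity; (3) im(α, β) is an inner substructure of P′, i.e. the inclusion maps α[X] ↪ X′ and β[Y] ↪ Y′ form a bounded morphism from im(α, β) to P′. -/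

import Mathlib

/-- The right polar `ρ_R A = {y ∈ Y : ∀ x ∈ A, x R y}`. -/
def rpolar {X Y : Type*} (R : X → Y → Prop) (A : Set X) : Set Y := {y | ∀ x ∈ A, R x y}

/-- The left polar `λ_R B = {x ∈ X : ∀ y ∈ B, x R y}`. -/
def lpolar {X Y : Type*} (R : X → Y → Prop) (B : Set Y) : Set X := {x | ∀ y ∈ B, R x y}

/-- `A ⊆ X` is stable if `A = λ_R (ρ_R A)`. -/
def StableX {X Y : Type*} (R : X → Y → Prop) (A : Set X) : Prop := A = lpolar R (rpolar R A)

/-- `B ⊆ Y` is stable if `B = ρ_R (λ_R B)`. -/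
def StableY {X Y : Type*} (R : X → Y → Prop) (B : Set Y) : Prop := B = rpolar R (lpolar R B)

/-- The quasi-order `≤₁` on `X`. -/
def le1 {X Y : Type*} (R : X → Y → Prop) (x x' : X) : Prop := rpolar R {x} ⊆ rpolar R {x'}

/-- The quasi-order `≤₂` on `Y`. -/
def le2 {X Y : Type*} (R : X → Y → Prop) (y y' : Y) : Prop := lpolar R {y} ⊆ lpolar R {y'}

/-- The operator `f_S` induced on stable sets by `S ⊆ Xⁿ × Y`. -/
def fS {X Y : Type*} {n : ℕ} (R : X → Y → Prop) (S : (Fin n → X) → Y → Prop)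
    (A : Fin n → Set X) : Set X :=
  lpolar R {y | ∀ xs : Fin n → X, (∀ i, xs i ∈ A i) → S xs y}

/-- The dual operator `g_T` induced on stable sets by `T ⊆ X × Yᵐ`. -/
def gT {X Y : Type*} {m : ℕ} (R : X → Y → Prop) (T : X → (Fin m → Y) → Prop)
    (A : Fin m → Set X) : Set X :=
  {x | ∀ ys : Fin m → Y, (∀ i, ys i ∈ rpolar R (A i)) → T x ys}

/-- All sections of `S ⊆ Xⁿ × Y` are stable. -/
def SSectionsStable {X Y : Type*} {n : ℕ} (R : X → Y → Prop)
    (S : (Fin n → X) → Y → Prop) : Prop :=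
  (∀ xs : Fin n → X, StableY R {y | S xs y}) ∧
  (∀ (xs : Fin n → X) (i : Fin n) (y : Y), StableX R {x' | S (Function.update xs i x') y})

/-- All sections of `T ⊆ X × Yᵐ` are stable. -/
def TSectionsStable {X Y : Type*} {m : ℕ} (R : X → Y → Prop)
    (T : X → (Fin m → Y) → Prop) : Prop :=
  (∀ ys : Fin m → Y, StableX R {x | T x ys}) ∧
  (∀ (x : X) (ys : Fin m → Y) (i : Fin m), StableY R {y' | T x (Function.update ys i y')})
/-- A bounded morphism between plain polarities. -/
structure IsPolarityMorphism {X Y X' Y' : Type*} (R : X → Y → Prop) (R' : X' → Y' → Prop)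
    (α : X → X') (β : Y → Y') : Prop where
  mono1 : ∀ ⦃x z : X⦄, le1 R x z → le1 R' (α x) (α z)
  mono2 : ∀ ⦃y w : Y⦄, le2 R y w → le2 R' (β y) (β w)
  backR : ∀ ⦃x : X⦄ ⦃y : Y⦄, R' (α x) (β y) → R x y
  forthR1 : ∀ ⦃x' : X'⦄ ⦃y : Y⦄, (∀ x : X, le1 R' x' (α x) → R x y) → R' x' (β y)
  forthR2 : ∀ ⦃x : X⦄ ⦃y' : Y'⦄, (∀ y : Y, le2 R' y' (β y) → R x y) → R' (α x) y'

/-- A bounded morphism between Ω-polarities. -/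
structure IsBddMorphism {X Y X' Y' : Type*} {n m : ℕ}
    (R : X → Y → Prop) (S : (Fin n → X) → Y → Prop) (T : X → (Fin m → Y) → Prop)
    (R' : X' → Y' → Prop) (S' : (Fin n → X') → Y' → Prop) (T' : X' → (Fin m → Y') → Prop)
    (α : X → X') (β : Y → Y') : Prop where
  mono1 : ∀ ⦃x z : X⦄, le1 R x z → le1 R' (α x) (α z)
  mono2 : ∀ ⦃y w : Y⦄, le2 R y w → le2 R' (β y) (β w)
  backR : ∀ ⦃x : X⦄ ⦃y : Y⦄, R' (α x) (β y) → R x y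
  forthR1 : ∀ ⦃x' : X'⦄ ⦃y : Y⦄, (∀ x : X, le1 R' x' (α x) → R x y) → R' x' (β y)
  forthR2 : ∀ ⦃x : X⦄ ⦃y' : Y'⦄, (∀ y : Y, le2 R' y' (β y) → R x y) → R' (α x) y'
  backS : ∀ ⦃xs : Fin n → X⦄ ⦃y : Y⦄, S' (fun i => α (xs i)) (β y) → S xs y
  forthS : ∀ ⦃xs' : Fin n → X'⦄ ⦃y : Y⦄,
    (∀ xs : Fin n → X, (∀ i, le1 R' (xs' i) (α (xs i))) → S xs y) → S' xs' (β y)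
  backT : ∀ ⦃x : X⦄ ⦃ys : Fin m → Y⦄, T' (α x) (fun i => β (ys i)) → T x ys
  forthT : ∀ ⦃x : X⦄ ⦃ys' : Fin m → Y'⦄,
    (∀ ys : Fin m → Y, (∀ i, le2 R' (ys' i) (β (ys i))) → T x ys) → T' (α x) ys'
/-- The polarity relation of the image structure `im(α, β)`, on the images of `α` and `β`. -/
def imR {X Y X' Y' : Type*} (R' : X' → Y' → Prop) (α : X → X') (β : Y → Y') :
    ↥(Set.range α) → ↥(Set.range β) → Prop :=
  fun x y => R' x.val y.val

/-- The `S`-relation of the image structure `im(α, β)`. -/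
def imS {X Y X' Y' : Type*} {n : ℕ} (S' : (Fin n → X') → Y' → Prop)
    (α : X → X') (β : Y → Y') :
    (Fin n → ↥(Set.range α)) → ↥(Set.range β) → Prop :=
  fun xs y => S' (fun i => (xs i).val) y.val

/-- The `T`-relation of the image structure `im(α, β)`. -/
def imT {X Y X' Y' : Type*} {m : ℕ} (T' : X' → (Fin m → Y') → Prop)
    (α : X → X') (β : Y → Y') :
    ↥(Set.range α) → (Fin m → ↥(Set.range β)) → Prop :=
  fun x ys => T' x.val (fun i => (ys i).val)

/-!
The bounded-morphism conditions (2_R), (3_R) say that whether `α x R' y'` holds is decided by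
the `y ∈ Y` with `y' ≤₂' β y`, and dually for `x' R' β y`. Hence a row of `R'` through a point
of `α[X]` is determined by its values on `β[Y]` (and dually), which gives (1). For (2), the
same fact shows that the trace on `β[Y]` of a stable subset of `Y'` is stable for `R″`
(and dually), and the sections of `S″`, `T″` are traces of sections of `S'`, `T'`. For (3),
the forth conditions for the inclusions come from those for `(α, β)`; for (2_S) and (2_T)
one also needs that `S'` and `T'` are monotone in each argument, which holds because their
sections are stable.
-/

section Polarity

variable {X Y : Type*} {R : X → Y → Prop}

theorem le1_iff_forall_rel {x z : X} : le1 R x z ↔ ∀ y, R x y → R z y := by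
  simp [le1, rpolar, Set.subset_def]

theorem le2_iff_forall_rel {y w : Y} : le2 R y w ↔ ∀ x, R x y → R x w := by
  simp [le2, lpolar, Set.subset_def]

theorem subset_rpolar_lpolar (B : Set Y) : B ⊆ rpolar R (lpolar R B) :=
  fun _ hy _ hx => hx _ hy

theorem subset_lpolar_rpolar (A : Set X) : A ⊆ lpolar R (rpolar R A) :=
  fun _ hx _ hy => hy _ hx

theorem mem_lpolar_of_le1 {B : Set Y} {x z : X} (hx : x ∈ lpolar R B) (hxz : le1 R x z) :
    z ∈ lpolar R B :=
  fun y hy => le1_iff_forall_rel.1 hxz y (hx y hy)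

theorem mem_rpolar_of_le2 {A : Set X} {y w : Y} (hy : y ∈ rpolar R A) (hyw : le2 R y w) :
    w ∈ rpolar R A :=
  fun x hx => le2_iff_forall_rel.1 hyw x (hy x hx)

theorem StableX.mem_of_le1 {A : Set X} (hA : StableX R A) {x z : X} (hx : x ∈ A)
    (hxz : le1 R x z) : z ∈ A := by
  rw [hA] at hx ⊢
  exact mem_lpolar_of_le1 hx hxz

theorem StableY.mem_of_le2 {B : Set Y} (hB : StableY R B) {y w : Y} (hy : y ∈ B)
    (hyw : le2 R y w) : w ∈ B := by
  rw [hB] at hy ⊢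
  exact mem_rpolar_of_le2 hy hyw

end Polarity

theorem mem_of_forall_rel_of_update_mem {ι A : Type*} [Fintype ι] [DecidableEq ι]
    {r : A → A → Prop} {P : Set (ι → A)}
    (hP : ∀ f i a, r (f i) a → f ∈ P → Function.update f i a ∈ P)
    {a b : ι → A} (hab : ∀ i, r (a i) (b i)) (ha : a ∈ P) : b ∈ P := by
  suffices ∀ s : Finset ι, s.piecewise b a ∈ P by simpa using this Finset.univ
  intro s
  induction s using Finset.induction_on with
  | empty => simpa using ha
  | insert j s hj ih =>
    rw [Finset.piecewise_insert]
    refine hP _ j _ ?_ ih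
    rw [Finset.piecewise_eq_of_notMem _ _ _ hj]
    exact hab j

section Sections

variable {X Y : Type*} {n m : ℕ} {R : X → Y → Prop}

theorem SSectionsStable.rel_of_le1 {S : (Fin n → X) → Y → Prop} (hS : SSectionsStable R S)
    {a b : Fin n → X} (hab : ∀ i, le1 R (a i) (b i)) {y : Y} (ha : S a y) : S b y :=
  mem_of_forall_rel_of_update_mem (P := {xs | S xs y})
    (fun xs i _ hle hxs => (hS.2 xs i y).mem_of_le1 (by simpa using hxs) hle) hab ha

theorem TSectionsStable.rel_of_le2 {T : X → (Fin m → Y) → Prop} (hT : TSectionsStable R T)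
    {a b : Fin m → Y} (hab : ∀ i, le2 R (a i) (b i)) {x : X} (ha : T x a) : T x b :=
  mem_of_forall_rel_of_update_mem (P := {ys | T x ys})
    (fun ys i _ hle hys => (hT.2 x ys i).mem_of_le2 (by simpa using hys) hle) hab ha

end Sections

namespace IsPolarityMorphism

variable {X Y X' Y' : Type*} {n m : ℕ} {R : X → Y → Prop} {R' : X' → Y' → Prop}
  {α : X → X'} {β : Y → Y'} (h : IsPolarityMorphism R R' α β)
include h

theorem rel_left_iff (x : X) (y' : Y') :
    R' (α x) y' ↔ ∀ y, le2 R' y' (β y) → R' (α x) (β y) :=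
  ⟨fun hR _ hle => le2_iff_forall_rel.1 hle _ hR,
    fun H => h.forthR2 fun y hle => h.backR (H y hle)⟩

theorem rel_right_iff (x' : X') (y : Y) :
    R' x' (β y) ↔ ∀ x, le1 R' x' (α x) → R' (α x) (β y) :=
  ⟨fun hR _ hle => le1_iff_forall_rel.1 hle _ hR,
    fun H => h.forthR1 fun x hle => h.backR (H x hle)⟩

theorem le1_imR_iff (x z : Set.range α) : le1 (imR R' α β) x z ↔ le1 R' x.val z.val := by
  obtain ⟨_, x, rfl⟩ := x
  obtain ⟨_, z, rfl⟩ := z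
  refine ⟨fun H => le1_iff_forall_rel.2 fun y' hxy' => ?_,
    fun H => le1_iff_forall_rel.2 fun y => le1_iff_forall_rel.1 H y.val⟩
  refine (h.rel_left_iff z y').2 fun y hle => ?_
  exact le1_iff_forall_rel.1 H ⟨β y, y, rfl⟩ (le2_iff_forall_rel.1 hle _ hxy')

theorem le2_imR_iff (y w : Set.range β) : le2 (imR R' α β) y w ↔ le2 R' y.val w.val := by
  obtain ⟨_, y, rfl⟩ := y
  obtain ⟨_, w, rfl⟩ := w
  refine ⟨fun H => le2_iff_forall_rel.2 fun x' hxy' => ?_,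
    fun H => le2_iff_forall_rel.2 fun x => le2_iff_forall_rel.1 H x.val⟩
  refine (h.rel_right_iff x' w).2 fun x hle => ?_
  exact le2_iff_forall_rel.1 H ⟨α x, x, rfl⟩ (le1_iff_forall_rel.1 hle _ hxy')

theorem stableY_imR_preimage {B' : Set Y'} (hB' : StableY R' B') :
    StableY (imR R' α β) (Subtype.val ⁻¹' B') := by
  refine (subset_rpolar_lpolar _).antisymm ?_
  rintro ⟨_, y, rfl⟩ hy
  change β y ∈ B'
  rw [hB']
  refine fun x' hx' => (h.rel_right_iff x' y).2 fun x hle => ?_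
  exact hy ⟨α x, x, rfl⟩ fun y' hy' => mem_lpolar_of_le1 hx' hle y'.val hy'

theorem stableX_imR_preimage {A' : Set X'} (hA' : StableX R' A') :
    StableX (imR R' α β) (Subtype.val ⁻¹' A') := by
  refine (subset_lpolar_rpolar _).antisymm ?_
  rintro ⟨_, x, rfl⟩ hx
  change α x ∈ A'
  rw [hA']
  refine fun y' hy' => (h.rel_left_iff x y').2 fun y hle => ?_
  exact hx ⟨β y, y, rfl⟩ fun x' hx' => mem_rpolar_of_le2 hy' hle x'.val hx'

theorem sSectionsStable_imS {S' : (Fin n → X') → Y' → Prop} (hS' : SSectionsStable R' S') :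
    SSectionsStable (imR R' α β) (imS S' α β) := by
  refine ⟨fun xs => h.stableY_imR_preimage (hS'.1 _), fun xs i y => ?_⟩
  have hsec : {x | imS S' α β (Function.update xs i x) y} =
      Subtype.val ⁻¹' {x' | S' (Function.update (Subtype.val ∘ xs) i x') y.val} := by
    ext x
    exact iff_of_eq (congrArg (S' · y.val) (Function.comp_update _ _ _ _))
  rw [hsec]
  exact h.stableX_imR_preimage (hS'.2 _ i _)

theorem tSectionsStable_imT {T' : X' → (Fin m → Y') → Prop} (hT' : TSectionsStable R' T') :
    TSectionsStable (imR R' α β) (imT T' α β) := by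
  refine ⟨fun ys => h.stableX_imR_preimage (hT'.1 _), fun x ys i => ?_⟩
  have hsec : {y | imT T' α β x (Function.update ys i y)} =
      Subtype.val ⁻¹' {y' | T' x.val (Function.update (Subtype.val ∘ ys) i y')} := by
    ext y
    exact iff_of_eq (congrArg (T' x.val) (Function.comp_update _ _ _ _))
  rw [hsec]
  exact h.stableY_imR_preimage (hT'.2 _ _ i)

end IsPolarityMorphism

namespace IsBddMorphism

variable {X Y X' Y' : Type*} {n m : ℕ}
  {R : X → Y → Prop} {S : (Fin n → X) → Y → Prop} {T : X → (Fin m → Y) → Prop}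
  {R' : X' → Y' → Prop} {S' : (Fin n → X') → Y' → Prop} {T' : X' → (Fin m → Y') → Prop}
  {α : X → X'} {β : Y → Y'} (h : IsBddMorphism R S T R' S' T' α β)
include h

theorem toIsPolarityMorphism : IsPolarityMorphism R R' α β :=
  ⟨h.mono1, h.mono2, h.backR, h.forthR1, h.forthR2⟩

theorem rel_S_iff (hS' : SSectionsStable R' S') (xs' : Fin n → X') (y : Y) :
    S' xs' (β y) ↔
      ∀ xs : Fin n → X, (∀ i, le1 R' (xs' i) (α (xs i))) → S' (α ∘ xs) (β y) :=
  ⟨fun hS _ hle => hS'.rel_of_le1 hle hS,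
    fun H => h.forthS fun xs hle => h.backS (H xs hle)⟩

theorem rel_T_iff (hT' : TSectionsStable R' T') (x : X) (ys' : Fin m → Y') :
    T' (α x) ys' ↔
      ∀ ys : Fin m → Y, (∀ i, le2 R' (ys' i) (β (ys i))) → T' (α x) (β ∘ ys) :=
  ⟨fun hT _ hle => hT'.rel_of_le2 hle hT,
    fun H => h.forthT fun ys hle => h.backT (H ys hle)⟩

theorem isBddMorphism_val (hS' : SSectionsStable R' S') (hT' : TSectionsStable R' T') :
    IsBddMorphism (imR R' α β) (imS S' α β) (imT T' α β) R' S' T'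
      Subtype.val Subtype.val where
  mono1 x z := (h.toIsPolarityMorphism.le1_imR_iff x z).1
  mono2 y w := (h.toIsPolarityMorphism.le2_imR_iff y w).1
  backR _ _ := id
  forthR1 := by
    rintro x' ⟨_, y, rfl⟩ H
    exact (h.toIsPolarityMorphism.rel_right_iff x' y).2 fun x hle => H ⟨α x, x, rfl⟩ hle
  forthR2 := by
    rintro ⟨_, x, rfl⟩ y' H
    exact (h.toIsPolarityMorphism.rel_left_iff x y').2 fun y hle => H ⟨β y, y, rfl⟩ hle
  backS _ _ := id
  forthS := by
    rintro xs' ⟨_, y, rfl⟩ H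
    exact (h.rel_S_iff hS' xs' y).2 fun xs hle => H (fun i => ⟨α (xs i), xs i, rfl⟩) hle
  backT _ _ := id
  forthT := by
    rintro ⟨_, x, rfl⟩ ys' H
    exact (h.rel_T_iff hT' x ys').2 fun ys hle => H (fun i => ⟨β (ys i), ys i, rfl⟩) hle

end IsBddMorphism

theorem stmt12_general {X Y X' Y' : Type*} {n m : ℕ}
    (R : X → Y → Prop) (S : (Fin n → X) → Y → Prop) (T : X → (Fin m → Y) → Prop)
    (R' : X' → Y' → Prop) (S' : (Fin n → X') → Y' → Prop) (T' : X' → (Fin m → Y') → Prop)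
    (hS' : SSectionsStable R' S') (hT' : TSectionsStable R' T')
    (α : X → X') (β : Y → Y') (h : IsBddMorphism R S T R' S' T' α β) :
    -- (1) the quasi-orders of `im(α, β)` are the restrictions of `≤₁'` and `≤₂'`
    (∀ x z : ↥(Set.range α), le1 (imR R' α β) x z ↔ le1 R' x.val z.val) ∧
    (∀ y w : ↥(Set.range β), le2 (imR R' α β) y w ↔ le2 R' y.val w.val) ∧
    -- (2) all sections of `S″` and `T″` are stable in `im(α, β)`
    SSectionsStable (imR R' α β) (imS S' α β) ∧
    TSectionsStable (imR R' α β) (imT T' α β) ∧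
    -- (3) the inclusion maps form a bounded morphism from `im(α, β)` to `P′`
    IsBddMorphism (imR R' α β) (imS S' α β) (imT T' α β) R' S' T'
      (Subtype.val : ↥(Set.range α) → X') (Subtype.val : ↥(Set.range β) → Y') :=
  have hR := h.toIsPolarityMorphism
  ⟨hR.le1_imR_iff, hR.le2_imR_iff, hR.sSectionsStable_imS hS', hR.tSectionsStable_imT hT',
    h.isBddMorphism_val hS' hT'⟩

/-- The image `im(α, β)` of a bounded morphism of Ω-polarities: its quasi-orders are the
restrictions of those of the codomain, all its sections are stable (so it is an
Ω-polarity), and it is an inner substructure of the codomain (the inclusions form a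
bounded morphism). -/
theorem stmt12 {X Y X' Y' : Type*} {n m : ℕ}
    (R : X → Y → Prop) (S : (Fin n → X) → Y → Prop) (T : X → (Fin m → Y) → Prop)
    (hS : SSectionsStable R S) (hT : TSectionsStable R T)
    (R' : X' → Y' → Prop) (S' : (Fin n → X') → Y' → Prop) (T' : X' → (Fin m → Y') → Prop)
    (hS' : SSectionsStable R' S') (hT' : TSectionsStable R' T')
    (α : X → X') (β : Y → Y') (h : IsBddMorphism R S T R' S' T' α β) :
    -- (1) the quasi-orders of `im(α, β)` are the restrictions of `≤₁'` and `≤₂'`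
    (∀ x z : ↥(Set.range α), le1 (imR R' α β) x z ↔ le1 R' x.val z.val) ∧
    (∀ y w : ↥(Set.range β), le2 (imR R' α β) y w ↔ le2 R' y.val w.val) ∧
    -- (2) all sections of `S″` and `T″` are stable in `im(α, β)`
    SSectionsStable (imR R' α β) (imS S' α β) ∧
    TSectionsStable (imR R' α β) (imT T' α β) ∧
    -- (3) the inclusion maps form a bounded morphism from `im(α, β)` to `P′`
    IsBddMorphism (imR R' α β) (imS S' α β) (imT T' α β) R' S' T'
      (Subtype.val : ↥(Set.range α) → X') (Subtype.val : ↥(Set.range β) → Y') :=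
  stmt12_general R S T R' S' T' hS' hT' α β h
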